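/- For any nonnegative real sequence a_0, a_1, ..., a_T with a_0 > 0, the sum over t from 1 to T of a_t / (a_0 + a_1 + ... + a_t) is at most log(a_0 + a_1 + ... + a_T) - log(a_0). -/

import Mathlib

theorem log_sum_lemma (T : ℕ) (a : ℕ → ℝ) (ha : ∀ t, 0 ≤ a t) (ha0 : 0 < a 0) :
    ∑ t ∈ Finset.Icc 1 T, a t / (a 0 + ∑ s ∈ Finset.Icc 1 t, a s) ≤
      Real.log (a 0 + ∑ t ∈ Finset.Icc 1 T, a t) - Real.log (a 0) := by
  have hS : ∀ t, 0 < a 0 + ∑ s ∈ Finset.Icc 1 t, a s := fun t => by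
    have : 0 ≤ ∑ s ∈ Finset.Icc 1 t, a s := Finset.sum_nonneg fun s _ => ha s
    linarith
  induction T with
  | zero => simp
  | succ T ih =>
    rw [Finset.sum_Icc_succ_top (by omega), Finset.sum_Icc_succ_top (by omega)]
    have key : a (T+1) / (a 0 + (∑ s ∈ Finset.Icc 1 T, a s + a (T+1))) ≤
        Real.log (a 0 + (∑ s ∈ Finset.Icc 1 T, a s + a (T+1))) -
        Real.log (a 0 + ∑ s ∈ Finset.Icc 1 T, a s) := by
      set S := a 0 + ∑ s ∈ Finset.Icc 1 T, a s with hSdef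
      have hS0 : 0 < S := hS T
      have hS1 : 0 < S + a (T+1) := by have := ha (T+1); linarith
      have hlog : Real.log (S / (S + a (T+1))) ≤ S / (S + a (T+1)) - 1 :=
        Real.log_le_sub_one_of_pos (by positivity)
      rw [Real.log_div (ne_of_gt hS0) (ne_of_gt hS1)] at hlog
      have heq : S / (S + a (T+1)) - 1 = -(a (T+1) / (S + a (T+1))) := by
        field_simp
        ring
      rw [heq] at hlog
      have : a 0 + (∑ s ∈ Finset.Icc 1 T, a s + a (T+1)) = S + a (T+1) := by
        rw [hSdef]; ring
      rw [this]
      linarith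
    have hconv : ∑ t ∈ Finset.Icc 1 T, a t / (a 0 + ∑ s ∈ Finset.Icc 1 t, a s) ≤
        Real.log (a 0 + ∑ s ∈ Finset.Icc 1 T, a s) - Real.log (a 0) := ih
    linarith
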